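/- Let n ≥ 1 and let λ ∈ ℕ^n be a nonzero multi-index. For all natural numbers p, q ≥ 0 with p + q + 1 = |λ|, there exist multi-indices λ', λ'' ∈ ℕ^n and an index ℓ ∈ {1,…,n} such that λ = λ' + λ'' + c_ℓ, |λ'| = p, |λ''| = q, and s_{λ'} · s_{λ''} ≤ e^{n³} · s_λ · |λ|^n. -/

import Mathlib

open Finset

/-- `s_λ = ∏_j (λ_j/|λ|)^{λ_j/2}` (real powers, with the conventions `0^0 = 1` and `s_0 = 1`). -/
noncomputable def sCoeff {n : ℕ} (lam : Fin n → ℕ) : ℝ :=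
  ∏ j, ((lam j : ℝ) / ((∑ i, lam i : ℕ) : ℝ)) ^ ((lam j : ℝ) / 2)

/-!
Write `m = |λ|`, so `2 log s_λ = Σ_j λ_j log (λ_j / m)`. Split `λ` proportionally: start from
`⌊p λ_j / m⌋` and `⌊q λ_j / m⌋`, which leave at least one unit of `λ` over, and hand out the
leftover units so that the sizes become `p`, `q` and `1`. Every coordinate `a = λ'_j` then lies
within `[-1, 2]` of its proportional share `α = p λ_j / m`. The tangent-line inequality for the
convex function `x ↦ x log (x / p)` gives
`a log (a / p) ≤ α log (α / p) + (a - α) (log (a / p) + 1) ≤ (p / m) λ_j log (λ_j / m) + log m + 2`,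
and likewise for `λ''`. Since `(p + q) / m = 1 - 1 / m` and `λ_j log (λ_j / m) ≥ -m`, each
coordinate loses at most `2 log m + 5`, whence `s_{λ'} s_{λ''} ≤ e^{5n/2} m^n s_λ`; and
`5n/2 ≤ n³` once `n ≥ 2`, while for `n ≤ 1` every `s`-coefficient equals `1`.
-/

open Real

lemma Nat.sum_div_le_div_sum {ι : Type*} (s : Finset ι) (f : ι → ℕ) (m : ℕ) :
    ∑ i ∈ s, f i / m ≤ (∑ i ∈ s, f i) / m := by
  rcases m.eq_zero_or_pos with rfl | hm
  · simp
  rw [Nat.le_div_iff_mul_le hm, sum_mul]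
  exact sum_le_sum fun i _ => Nat.div_mul_le_self _ _

lemma Nat.sub_one_lt_cast_div (a b : ℕ) : (a : ℝ) / b - 1 < ((a / b : ℕ) : ℝ) := by
  simpa [Nat.floor_div_eq_div] using Nat.sub_one_lt_floor ((a : ℝ) / b)

section Splitting

variable {ι : Type*} [Fintype ι] [DecidableEq ι]

lemma exists_le_sum_eq (r : ι → ℕ) {d : ℕ} (hd : d ≤ ∑ i, r i) :
    ∃ u ≤ r, ∑ i, u i = d := by
  induction d with
  | zero => exact ⟨0, fun _ => Nat.zero_le _, by simp⟩
  | succ d ih =>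
    obtain ⟨u, hur, hu⟩ := ih (by omega)
    obtain ⟨j, -, hj⟩ := exists_lt_of_sum_lt (s := univ) (hu ▸ hd : ∑ i, u i < ∑ i, r i)
    refine ⟨u + Pi.single j 1, fun i => ?_, ?_⟩
    · by_cases hij : i = j
      · subst hij; simpa using hj
      · simpa [hij] using hur i
    · simp [sum_add_distrib, hu]

lemma exists_eq_add_add_single_of_le {L a₀ b₀ : ι → ℕ} {p q : ℕ} (hab : a₀ + b₀ ≤ L)
    (ha : ∑ i, a₀ i ≤ p) (hb : ∑ i, b₀ i ≤ q) (hL : p + q + 1 = ∑ i, L i) :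
    ∃ (a b : ι → ℕ) (ℓ : ι), L = a + b + Pi.single ℓ 1 ∧ a₀ ≤ a ∧ b₀ ≤ b ∧
      ∑ i, a i = p ∧ ∑ i, b i = q := by
  have hsum : ∑ i, (a₀ + b₀) i < ∑ i, L i := by
    simp only [Pi.add_apply, sum_add_distrib]; omega
  obtain ⟨ℓ, -, hℓ⟩ := exists_lt_of_sum_lt hsum
  set c : ι → ℕ := a₀ + b₀ + Pi.single ℓ 1
  have hc : c ≤ L := fun i => by
    by_cases hiℓ : i = ℓ
    · subst hiℓ; simpa [c] using hℓ
    · simpa [c, hiℓ] using hab i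
  set r := L - c
  have hLr : L = c + r := (add_tsub_cancel_of_le hc).symm
  have hr : ∑ i, r i = (p - ∑ i, a₀ i) + (q - ∑ i, b₀ i) := by
    have := congrArg (fun f => ∑ i, f i) hLr
    simp only [c, Pi.add_apply, sum_add_distrib, sum_pi_single', mem_univ, ↓reduceIte] at this
    omega
  obtain ⟨u, hur, hu⟩ := exists_le_sum_eq r (d := p - ∑ i, a₀ i) (by omega)
  have hru : r = u + (r - u) := (add_tsub_cancel_of_le hur).symm
  have hv : ∑ i, (r - u) i = q - ∑ i, b₀ i := by
    have := congrArg (fun f => ∑ i, f i) hru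
    simp only [Pi.add_apply, sum_add_distrib] at this
    omega
  refine ⟨a₀ + u, b₀ + (r - u), ℓ, ?_, le_self_add, le_self_add, ?_, ?_⟩
  · rw [hLr]; nth_rw 1 [hru]; simp only [c]; ac_rfl
  · simp only [Pi.add_apply, sum_add_distrib]; omega
  · simp only [Pi.add_apply, sum_add_distrib]; omega

end Splitting

lemma Nat.mul_div_add_mul_div_le {p q m : ℕ} (h : p + q ≤ m) (L : ℕ) : p * L / m + q * L / m ≤ L := by
  refine Nat.div_add_div_le_add_div.trans (Nat.div_le_of_le_mul ?_)
  rw [← add_mul]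
  gcongr

lemma sum_mul_div_sum_le {ι : Type*} [Fintype ι] (p : ℕ) (L : ι → ℕ) :
    ∑ i, p * L i / ∑ j, L j ≤ p := by
  refine (Nat.sum_div_le_div_sum _ _ _).trans ?_
  rw [← mul_sum]
  exact Nat.div_le_of_le_mul (mul_comm _ _).le

lemma sub_le_mul_log_div {x y : ℝ} (hx : 0 ≤ x) (hy : 0 < y) : x - y ≤ x * log (x / y) := by
  rcases hx.eq_or_lt with rfl | hx
  · simpa using hy.le
  · have h := one_sub_inv_le_log_of_pos (div_pos hx hy)
    rw [inv_div] at h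
    calc x - y = x * (1 - y / x) := by field_simp
      _ ≤ x * log (x / y) := mul_le_mul_of_nonneg_left h hx.le

lemma mul_log_div_le_tangent {a s α : ℝ} (ha : 0 < a) (hs : 0 < s) (hα : 0 ≤ α) :
    a * log (a / s) ≤ α * log (α / s) + (a - α) * (log (a / s) + 1) := by
  have hsplit : α * log (α / s) = α * log (α / a) + α * log (a / s) := by
    rcases hα.eq_or_lt with rfl | hα
    · simp
    · rw [← mul_add, ← log_mul (by positivity) (by positivity), div_mul_div_cancel₀ ha.ne']
  nlinarith [sub_le_mul_log_div hα ha]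

lemma mul_log_div_le_of_near_proportional {a s L m : ℕ} (has : a ≤ s) (hsm : s ≤ m)
    (hLm : L ≤ m) (h₁ : (s * L / m : ℝ) - 1 ≤ a) (h₂ : (a : ℝ) ≤ s * L / m + 2) :
    (a : ℝ) * log (a / s) ≤ s / m * (L * log (L / m)) + log m + 2 := by
  have hlogm : 0 ≤ log m := log_natCast_nonneg m
  rcases a.eq_zero_or_pos with rfl | ha
  · rcases L.eq_zero_or_pos with rfl | hL
    · simp only [CharP.cast_eq_zero, zero_div, log_zero, mul_zero, zero_add]
      linarith
    have hL' : (0 : ℝ) < L := by exact_mod_cast hL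
    have hm : (0 : ℝ) < m := by exact_mod_cast hL.trans_le hLm
    have hα : 0 ≤ (s * L / m : ℝ) := by positivity
    have hlog_ge : -log m ≤ log (L / m) := by
      rw [log_div hL'.ne' hm.ne']; linarith [log_natCast_nonneg L]
    have : s / m * (L * log (L / m)) = s * L / m * log (L / m) := by ring
    simp only [CharP.cast_eq_zero, zero_mul, this]
    nlinarith
  · have hs : (0 : ℝ) < s := by exact_mod_cast ha.trans_le has
    have ha' : (0 : ℝ) < a := by exact_mod_cast ha
    have htangent := mul_log_div_le_tangent ha' hs (α := s * L / m) (by positivity)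
    have hα : s * L / m * log (s * L / m / s) = s / m * (L * log (L / m)) := by
      rw [mul_div_assoc, mul_div_cancel_left₀ _ hs.ne']; ring
    have hlog_le : log (a / s) ≤ 0 :=
      log_nonpos (by positivity) (div_le_one_of_le₀ (by exact_mod_cast has) hs.le)
    have hlog_ge : -log m ≤ log (a / s) := by
      rw [log_div ha'.ne' hs.ne']
      have := log_le_log hs (by exact_mod_cast hsm : (s : ℝ) ≤ m)
      linarith [log_natCast_nonneg a]
    have herr : ((a : ℝ) - s * L / m) * (log (a / s) + 1) ≤ log m + 2 := by
      rcases le_or_gt 0 (log (a / s) + 1) with h | h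
      · nlinarith
      · nlinarith
    linarith

lemma mul_log_add_mul_log_le {a b L p q m : ℕ} (hm : p + q + 1 = m) (hLm : L ≤ m)
    (hap : a ≤ p) (hbq : b ≤ q) (hab : a + b ≤ L) (ha : p * L / m ≤ a) (hb : q * L / m ≤ b) :
    (a : ℝ) * log (a / p) + b * log (b / q) ≤ L * log (L / m) + 2 * log m + 5 := by
  have hm' : (0 : ℝ) < m := by exact_mod_cast (show 0 < m by omega)
  have hmR : (m : ℝ) = p + q + 1 := by exact_mod_cast hm.symm
  have hLmR : (L : ℝ) ≤ m := by exact_mod_cast hLm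
  have habR : (a : ℝ) + b ≤ L := by exact_mod_cast hab
  have ha₁ : (p * L / m : ℝ) - 1 ≤ a := by
    have := Nat.sub_one_lt_cast_div (p * L) m
    push_cast at this
    linarith [(Nat.cast_le (α := ℝ)).2 ha]
  have hb₁ : (q * L / m : ℝ) - 1 ≤ b := by
    have := Nat.sub_one_lt_cast_div (q * L) m
    push_cast at this
    linarith [(Nat.cast_le (α := ℝ)).2 hb]
  have hshares : (p * L / m : ℝ) + q * L / m + L / m = L := by
    field_simp; rw [hmR]
  have hL_div : (L / m : ℝ) ≤ 1 := div_le_one_of_le₀ hLmR hm'.le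
  have hX_ge : (L : ℝ) - m ≤ L * log (L / m) := sub_le_mul_log_div (by positivity) hm'
  have hA := mul_log_div_le_of_near_proportional hap (by omega) hLm ha₁
    (by linarith [div_nonneg (Nat.cast_nonneg L) hm'.le])
  have hB := mul_log_div_le_of_near_proportional hbq (by omega) hLm hb₁
    (by linarith [div_nonneg (Nat.cast_nonneg L) hm'.le])
  have hcomb : (p / m : ℝ) * (L * log (L / m)) + q / m * (L * log (L / m)) ≤
      L * log (L / m) + 1 := by
    have : (p / m : ℝ) + q / m = 1 - 1 / m := by field_simp; linarith
    have hX_div : -(L * log (L / m)) / m ≤ 1 := (div_le_one hm').2 (by linarith)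
    rw [← add_mul, this]
    linarith [show (1 - 1 / m) * (L * log (L / m)) = L * log (L / m) + -(L * log (L / m)) / m by
      ring]
  linarith

-- `log 0 = 0` lets a vanishing coordinate contribute `exp 0 = 1 = 0 ^ 0`.
lemma sCoeff_eq_exp {n : ℕ} (lam : Fin n → ℕ) :
    sCoeff lam = exp ((∑ j, (lam j : ℝ) * log (lam j / ((∑ i, lam i : ℕ) : ℝ))) / 2) := by
  rw [sCoeff, sum_div, exp_sum]
  refine prod_congr rfl fun j _ => ?_
  rcases (lam j).eq_zero_or_pos with h | h
  · simp [h]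
  · have hsum : 0 < ∑ i, lam i :=
      h.trans_le (single_le_sum (fun i _ => Nat.zero_le _) (mem_univ j))
    rw [rpow_def_of_pos (div_pos (by exact_mod_cast h) (by exact_mod_cast hsum))]
    ring_nf

lemma sCoeff_pos {n : ℕ} (lam : Fin n → ℕ) : 0 < sCoeff lam :=
  sCoeff_eq_exp lam ▸ exp_pos _

lemma sCoeff_of_le_one {n : ℕ} (hn : n ≤ 1) (lam : Fin n → ℕ) : sCoeff lam = 1 := by
  have : Subsingleton (Fin n) := Fin.subsingleton_iff_le_one.2 hn
  refine prod_eq_one fun j _ => ?_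
  rw [Fintype.sum_subsingleton _ j]
  rcases (lam j).eq_zero_or_pos with h | h
  · simp [h]
  · rw [div_self (by positivity), one_rpow]

lemma sCoeff_mul_sCoeff_le {n : ℕ} {lam a b : Fin n → ℕ} {p q : ℕ}
    (hpq : p + q + 1 = ∑ j, lam j) (hab : a + b ≤ lam) (ha : ∑ j, a j = p) (hb : ∑ j, b j = q)
    (ha₀ : ∀ j, p * lam j / ∑ i, lam i ≤ a j) (hb₀ : ∀ j, q * lam j / ∑ i, lam i ≤ b j) :
    sCoeff a * sCoeff b ≤ exp (5 * n / 2) * sCoeff lam * ((∑ j, lam j : ℕ) : ℝ) ^ n := by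
  set m := ∑ j, lam j
  have hm : (0 : ℝ) < m := by exact_mod_cast (show 0 < m by omega)
  have hcoord (j : Fin n) :
      (a j : ℝ) * log (a j / p) + b j * log (b j / q) ≤ lam j * log (lam j / m) + 2 * log m + 5 :=
    mul_log_add_mul_log_le hpq (single_le_sum (fun i _ => Nat.zero_le _) (mem_univ j))
      (ha ▸ single_le_sum (fun i _ => Nat.zero_le _) (mem_univ j))
      (hb ▸ single_le_sum (fun i _ => Nat.zero_le _) (mem_univ j)) (hab j) (ha₀ j) (hb₀ j)
  have hsum := sum_le_sum fun j (_ : j ∈ univ) => hcoord j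
  simp only [sum_add_distrib, sum_const, card_univ, Fintype.card_fin, nsmul_eq_mul] at hsum
  rw [sCoeff_eq_exp a, sCoeff_eq_exp b, sCoeff_eq_exp lam, ha, hb, ← exp_add,
    ← exp_log (pow_pos hm n), log_pow, ← exp_add, ← exp_add, exp_le_exp]
  linarith

theorem multiindex_splitting_general (n : ℕ) (lam : Fin n → ℕ)
    (p q : ℕ) (hpq : p + q + 1 = ∑ j, lam j) :
    ∃ (lam' lam'' : Fin n → ℕ) (ℓ : Fin n),
      (∀ j, lam j = lam' j + lam'' j + (if j = ℓ then 1 else 0)) ∧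
      (∑ j, lam' j) = p ∧ (∑ j, lam'' j) = q ∧
      sCoeff lam' * sCoeff lam'' ≤
        Real.exp ((n : ℝ) ^ 3) * sCoeff lam * ((∑ j, lam j : ℕ) : ℝ) ^ n := by
  obtain ⟨a, b, ℓ, hlam, ha₀, hb₀, ha, hb⟩ := exists_eq_add_add_single_of_le
    (a₀ := fun j => p * lam j / ∑ i, lam i) (b₀ := fun j => q * lam j / ∑ i, lam i)
    (fun j => Nat.mul_div_add_mul_div_le (by omega) (lam j)) (sum_mul_div_sum_le p lam) (sum_mul_div_sum_le q lam) hpq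
  refine ⟨a, b, ℓ, fun j => by simpa [Pi.single_apply] using congrFun hlam j, ha, hb, ?_⟩
  have hm : (1 : ℝ) ≤ ((∑ j, lam j : ℕ) : ℝ) := by exact_mod_cast (show 1 ≤ ∑ j, lam j by omega)
  rcases le_or_gt n 1 with hn | hn
  · rw [sCoeff_of_le_one hn, sCoeff_of_le_one hn, sCoeff_of_le_one hn, mul_one, mul_one]
    exact one_le_mul_of_one_le_of_one_le (one_le_exp (by positivity)) (one_le_pow₀ hm)
  · calc sCoeff a * sCoeff b ≤ exp (5 * n / 2) * sCoeff lam * ((∑ j, lam j : ℕ) : ℝ) ^ n :=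
          sCoeff_mul_sCoeff_le hpq (hlam ▸ le_self_add) ha hb ha₀ hb₀
      _ ≤ exp ((n : ℝ) ^ 3) * sCoeff lam * ((∑ j, lam j : ℕ) : ℝ) ^ n := by
          have hn' : (2 : ℝ) ≤ n := by exact_mod_cast hn
          have := sCoeff_pos lam
          gcongr
          nlinarith [mul_le_mul hn' hn' (by norm_num) (by positivity)]

/-- **good splittings of multi-indices.** Let `n ≥ 1` and let `λ ∈ ℕⁿ` be a
nonzero multi-index. For all `p, q ∈ ℕ` with `p + q + 1 = |λ|`, there exist multi-indices
`λ', λ'' ∈ ℕⁿ` and an index `ℓ` such that `λ = λ' + λ'' + c_ℓ`, `|λ'| = p`, `|λ''| = q`, and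
`s_{λ'} · s_{λ''} ≤ e^{n³} · s_λ · |λ|ⁿ`. -/
theorem multiindex_splitting (n : ℕ) (hn : 1 ≤ n) (lam : Fin n → ℕ) (hlam : lam ≠ 0)
    (p q : ℕ) (hpq : p + q + 1 = ∑ j, lam j) :
    ∃ (lam' lam'' : Fin n → ℕ) (ℓ : Fin n),
      (∀ j, lam j = lam' j + lam'' j + (if j = ℓ then 1 else 0)) ∧
      (∑ j, lam' j) = p ∧ (∑ j, lam'' j) = q ∧
      sCoeff lam' * sCoeff lam'' ≤
        Real.exp ((n : ℝ) ^ 3) * sCoeff lam * ((∑ j, lam j : ℕ) : ℝ) ^ n :=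
  multiindex_splitting_general n lam p q hpq
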